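/- arXiv:2405.14797 — 5 statements merged into one kernel-verified Lean document; each statement's English description precedes it below -/
import Mathlib

section
/- Let p be an odd prime, ν ≥ 1 an integer, and a, b integers. If min(ν, v_p(b)) < min(ν, v_p(a)), where v_p denotes the p-adic valuation (with v_p(0) treated as larger than ν), then ∑_{x mod p^ν} e_{p^ν}(ax² + bx) = 0. -/
/-!
Let `β = v_p(b) < ν` and `t = p^(ν-β-1)`. Since `p^(β+1) ∣ a`, the shift `x ↦ x + t` changes
`ax² + bx` modulo `p^ν` by the constant `bt` only, so the sum `S` satisfies `S = e(bt) S`; and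
`e(bt) ≠ 1` because `v_p(bt) = ν - 1`.
-/

open Finset

/-- `e_q(t) = exp(2πit/q)`. -/
noncomputable def eq' (q : ℕ) (t : ℤ) : ℂ :=
  Complex.exp (2 * Real.pi * Complex.I * t / q)

theorem Finset.sum_range_eq_sum_zmod {M : Type*} [AddCommMonoid M] (q : ℕ) [NeZero q]
    (f : ZMod q → M) : ∑ x ∈ range q, f x = ∑ x : ZMod q, f x :=
  sum_nbij' (fun x : ℕ => (x : ZMod q)) ZMod.val (by simp) (fun x _ => by simpa using x.val_lt)
    (fun x hx => ZMod.val_cast_of_lt (mem_range.mp hx)) (fun x _ => ZMod.natCast_zmod_val x)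
    (fun _ _ => rfl)

theorem AddChar.sum_quadratic_eq_zero {R M : Type*} [CommRing R] [Fintype R] [CommRing M]
    [IsDomain M] (ψ : AddChar R M) {a b t : R} (hat : a * t = 0) (hbt : ψ (b * t) ≠ 1) :
    ∑ x, ψ (a * x ^ 2 + b * x) = 0 := by
  have hshift : ∀ x, ψ (a * (x + t) ^ 2 + b * (x + t)) = ψ (b * t) * ψ (a * x ^ 2 + b * x) := by
    intro x
    rw [← AddChar.map_add_eq_mul]
    congr 1
    linear_combination (2 * x + t) * hat
  have hS : ψ (b * t) * ∑ x, ψ (a * x ^ 2 + b * x) = ∑ x, ψ (a * x ^ 2 + b * x) :=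
    calc ψ (b * t) * ∑ x, ψ (a * x ^ 2 + b * x)
        = ∑ x, ψ (a * (x + t) ^ 2 + b * (x + t)) := by simp only [mul_sum, hshift]
      _ = ∑ x, ψ (a * x ^ 2 + b * x) := Fintype.sum_equiv (Equiv.addRight t) _ _ fun _ => rfl
  exact (mul_left_eq_self₀.mp hS).resolve_left hbt

theorem eq'_eq_stdAddChar (q : ℕ) [NeZero q] (t : ℤ) :
    eq' q t = ZMod.stdAddChar (t : ZMod q) := by
  rw [ZMod.stdAddChar_coe, eq']

theorem exists_pow_succ_dvd_not_dvd_of_min_lt {p : ℕ} (hp : p ≠ 1) {ν : ℕ} {a b : ℤ}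
    (h : min ν (if b = 0 then ν + 1 else padicValInt p b)
        < min ν (if a = 0 then ν + 1 else padicValInt p a)) :
    ∃ k < ν, (p : ℤ) ^ (k + 1) ∣ a ∧ ¬ (p : ℤ) ^ (k + 1) ∣ b := by
  have hb : b ≠ 0 := by
    rintro rfl
    simp at h
  refine ⟨padicValInt p b, ?_, ?_, ?_⟩
  · simp only [hb, if_false] at h
    omega
  · rw [padicValInt_dvd_iff_of_ne_one hp]
    by_cases ha : a = 0
    · exact Or.inl ha
    · simp only [hb, ha, if_false] at h
      omega
  · simp [padicValInt_dvd_iff_of_ne_one hp, hb]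

theorem exists_mul_eq_zero_mul_ne_zero {p : ℕ} (hp : p ≠ 0) {ν k : ℕ} (hk : k < ν) {a b : ℤ}
    (ha : (p : ℤ) ^ (k + 1) ∣ a) (hb : ¬ (p : ℤ) ^ (k + 1) ∣ b) :
    ∃ t : ZMod (p ^ ν), (a : ZMod (p ^ ν)) * t = 0 ∧ (b : ZMod (p ^ ν)) * t ≠ 0 := by
  have : NeZero (p ^ ν) := ⟨pow_ne_zero ν hp⟩
  have hpow : ((p ^ ν : ℕ) : ℤ) = (p : ℤ) ^ (k + 1) * (p : ℤ) ^ (ν - k - 1) := by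
    rw [← pow_add, Nat.cast_pow]
    congr 1
    omega
  have ht : (p : ℤ) ^ (ν - k - 1) ≠ 0 := pow_ne_zero _ (by exact_mod_cast hp)
  refine ⟨((p : ℤ) ^ (ν - k - 1) : ℤ), ?_, ?_⟩
  · rw [← Int.cast_mul, ZMod.intCast_zmod_eq_zero_iff_dvd, hpow]
    exact mul_dvd_mul_right ha _
  · rw [← Int.cast_mul, Ne, ZMod.intCast_zmod_eq_zero_iff_dvd, hpow, mul_dvd_mul_iff_right ht]
    exact hb

theorem gauss_sum_vanishes_general (p : ℕ) (hp : p.Prime)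
    (ν : ℕ) (a b : ℤ)
    (h : min ν (if b = 0 then ν + 1 else padicValInt p b)
        < min ν (if a = 0 then ν + 1 else padicValInt p a)) :
    ∑ x ∈ Finset.range (p ^ ν), eq' (p ^ ν) (a * (x : ℤ) ^ 2 + b * (x : ℤ)) = 0 := by
  have : NeZero (p ^ ν) := ⟨pow_ne_zero ν hp.ne_zero⟩
  obtain ⟨k, hk, hka, hkb⟩ := exists_pow_succ_dvd_not_dvd_of_min_lt hp.ne_one h
  obtain ⟨t, hat, hbt⟩ := exists_mul_eq_zero_mul_ne_zero hp.ne_zero hk hka hkb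
  have hψ : ZMod.stdAddChar (N := p ^ ν) ((b : ZMod (p ^ ν)) * t) ≠ 1 := by
    rwa [Ne, ← (ZMod.stdAddChar (N := p ^ ν)).map_zero_eq_one, ZMod.injective_stdAddChar.eq_iff]
  simp only [eq'_eq_stdAddChar, Int.cast_add, Int.cast_mul, Int.cast_pow, Int.cast_natCast]
  rw [sum_range_eq_sum_zmod (p ^ ν)
    fun x : ZMod (p ^ ν) => ZMod.stdAddChar ((a : ZMod (p ^ ν)) * x ^ 2 + (b : ZMod (p ^ ν)) * x)]
  exact ZMod.stdAddChar.sum_quadratic_eq_zero hat hψ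

/-- For an odd prime `p`, `ν ≥ 1` and integers `a, b`, if
`min(ν, v_p(b)) < min(ν, v_p(a))` (with `v_p(0)` treated as larger than `ν`), then
`∑_{x mod p^ν} e_{p^ν}(ax² + bx) = 0`. -/
theorem gauss_sum_vanishes (p : ℕ) (hp : p.Prime) (hodd : Odd p)
    (ν : ℕ) (hν : 1 ≤ ν) (a b : ℤ)
    (h : min ν (if b = 0 then ν + 1 else padicValInt p b)
        < min ν (if a = 0 then ν + 1 else padicValInt p a)) :
    ∑ x ∈ Finset.range (p ^ ν), eq' (p ^ ν) (a * (x : ℤ) ^ 2 + b * (x : ℤ)) = 0 :=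
  gauss_sum_vanishes_general p hp ν a b h
end

section
/- There is an absolute constant c > 0 with the following property. Let 𝔇 ≥ 1 be an integer, T > 0 a real number, and c₁, c₂, d₁, d₂ integers with c₁² + 𝔇c₂² ≥ T²/100. Then the number of quadruples (a₁, a₂, b₁, b₂) ∈ ℤ⁴ satisfying (a₁ + a₂√−𝔇)(d₁ + d₂√−𝔇) − (b₁ + b₂√−𝔇)(c₁ + c₂√−𝔇) = 1 in ℤ[√−𝔇] and a₁² + a₂²𝔇 + b₁² + b₂²𝔇 + c₁² + c₂²𝔇 + d₁² + d₂²𝔇 < T² is at most c. -/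
set_option maxHeartbeats 1000000 in
/-- There is an absolute constant `c > 0` such that for every integer `𝔇 ≥ 1`, real `T > 2`... -/
theorem bounded_completions : ∃ c : ℕ, 0 < c ∧
    ∀ (𝔇 : ℕ), 1 ≤ 𝔇 → ∀ (T : ℝ), 0 < T → ∀ (c₁ c₂ d₁ d₂ : ℤ),
      T ^ 2 / 100 ≤ ((c₁ ^ 2 + (𝔇 : ℤ) * c₂ ^ 2 : ℤ) : ℝ) →
      (Set.Finite {v : ℤ × ℤ × ℤ × ℤ |
          (v.1 * d₁ - (𝔇 : ℤ) * v.2.1 * d₂) - (v.2.2.1 * c₁ - (𝔇 : ℤ) * v.2.2.2 * c₂) = 1 ∧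
          (v.1 * d₂ + v.2.1 * d₁) - (v.2.2.1 * c₂ + v.2.2.2 * c₁) = 0 ∧
          ((v.1 ^ 2 + (𝔇 : ℤ) * v.2.1 ^ 2 + v.2.2.1 ^ 2 + (𝔇 : ℤ) * v.2.2.2 ^ 2
              + c₁ ^ 2 + (𝔇 : ℤ) * c₂ ^ 2 + d₁ ^ 2 + (𝔇 : ℤ) * d₂ ^ 2 : ℤ) : ℝ) < T ^ 2} ∧
        Set.ncard {v : ℤ × ℤ × ℤ × ℤ |
          (v.1 * d₁ - (𝔇 : ℤ) * v.2.1 * d₂) - (v.2.2.1 * c₁ - (𝔇 : ℤ) * v.2.2.2 * c₂) = 1 ∧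
          (v.1 * d₂ + v.2.1 * d₁) - (v.2.2.1 * c₂ + v.2.2.2 * c₁) = 0 ∧
          ((v.1 ^ 2 + (𝔇 : ℤ) * v.2.1 ^ 2 + v.2.2.1 ^ 2 + (𝔇 : ℤ) * v.2.2.2 ^ 2
              + c₁ ^ 2 + (𝔇 : ℤ) * c₂ ^ 2 + d₁ ^ 2 + (𝔇 : ℤ) * d₂ ^ 2 : ℤ) : ℝ) < T ^ 2} ≤ c) := by
  refine ⟨1521, by norm_num, ?_⟩
  intro 𝔇 hD T hT c₁ c₂ d₁ d₂ hc
  set S : Set (ℤ × ℤ × ℤ × ℤ) := {v : ℤ × ℤ × ℤ × ℤ |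
      (v.1 * d₁ - (𝔇 : ℤ) * v.2.1 * d₂) - (v.2.2.1 * c₁ - (𝔇 : ℤ) * v.2.2.2 * c₂) = 1 ∧
      (v.1 * d₂ + v.2.1 * d₁) - (v.2.2.1 * c₂ + v.2.2.2 * c₁) = 0 ∧
      ((v.1 ^ 2 + (𝔇 : ℤ) * v.2.1 ^ 2 + v.2.2.1 ^ 2 + (𝔇 : ℤ) * v.2.2.2 ^ 2
          + c₁ ^ 2 + (𝔇 : ℤ) * c₂ ^ 2 + d₁ ^ 2 + (𝔇 : ℤ) * d₂ ^ 2 : ℤ) : ℝ) < T ^ 2} with hSdef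
  rcases Set.eq_empty_or_nonempty S with hE | ⟨⟨a₁, a₂, b₁, b₂⟩, hv0⟩
  · rw [hE]
    exact ⟨Set.finite_empty, by simp⟩
  obtain ⟨h01, h02, h03⟩ := hv0
  simp only at h01 h02 h03
  -- the difference map: t = a₀ * B − b₀ * A in ℤ[√−𝔇]
  set f : ℤ × ℤ × ℤ × ℤ → ℤ × ℤ := fun v =>
    (a₁ * (v.2.2.1 - b₁) - (𝔇 : ℤ) * a₂ * (v.2.2.2 - b₂)
        - (b₁ * (v.1 - a₁) - (𝔇 : ℤ) * b₂ * (v.2.1 - a₂)),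
     a₁ * (v.2.2.2 - b₂) + a₂ * (v.2.2.1 - b₁)
        - (b₁ * (v.2.1 - a₂) + b₂ * (v.1 - a₁))) with hfdef
  -- key recovery: every solution v satisfies v = v₀ + t ⋆ (c, d)
  have key : ∀ v ∈ S,
      v.1 - a₁ = (f v).1 * c₁ - (𝔇 : ℤ) * (f v).2 * c₂ ∧
      v.2.1 - a₂ = (f v).1 * c₂ + (f v).2 * c₁ ∧
      v.2.2.1 - b₁ = (f v).1 * d₁ - (𝔇 : ℤ) * (f v).2 * d₂ ∧
      v.2.2.2 - b₂ = (f v).1 * d₂ + (f v).2 * d₁ := by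
    rintro ⟨x₁, x₂, y₁, y₂⟩ ⟨hv1, hv2, -⟩
    simp only at hv1 hv2
    simp only [hfdef]
    refine ⟨?_, ?_, ?_, ?_⟩
    · linear_combination a₁ * hv1 - a₁ * h01 - (𝔇 : ℤ) * a₂ * hv2 + (𝔇 : ℤ) * a₂ * h02
        - (x₁ - a₁) * h01 + (𝔇 : ℤ) * (x₂ - a₂) * h02
    · linear_combination a₁ * hv2 - a₁ * h02 + a₂ * hv1 - a₂ * h01
        - (x₂ - a₂) * h01 - (x₁ - a₁) * h02
    · linear_combination b₁ * hv1 - b₁ * h01 - (𝔇 : ℤ) * b₂ * hv2 + (𝔇 : ℤ) * b₂ * h02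
        - (y₁ - b₁) * h01 + (𝔇 : ℤ) * (y₂ - b₂) * h02
    · linear_combination b₁ * hv2 - b₁ * h02 + b₂ * hv1 - b₂ * h01
        - (y₂ - b₂) * h01 - (y₁ - b₁) * h02
  have hDpos : (1 : ℤ) ≤ (𝔇 : ℤ) := by exact_mod_cast hD
  -- f maps S into the box [-19,19]²
  have hmaps : Set.MapsTo f S ((Finset.Icc (-19 : ℤ) 19 ×ˢ Finset.Icc (-19 : ℤ) 19 : Finset (ℤ × ℤ)) : Set (ℤ × ℤ)) := by
    intro v hv
    obtain ⟨k1, k2, -, -⟩ := key v hv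
    obtain ⟨t1, t2, htdef⟩ : ∃ p q, f v = (p, q) := ⟨(f v).1, (f v).2, rfl⟩
    rw [htdef] at k1 k2
    simp only [Prod.fst, Prod.snd] at k1 k2
    obtain ⟨-, -, h3⟩ := hv
    have hNmul : (v.1 - a₁) ^ 2 + (𝔇 : ℤ) * (v.2.1 - a₂) ^ 2
        = (t1 ^ 2 + (𝔇 : ℤ) * t2 ^ 2) * (c₁ ^ 2 + (𝔇 : ℤ) * c₂ ^ 2) := by
      rw [k1, k2]; ring
    -- real bounds
    have hx : ((v.1 ^ 2 + (𝔇 : ℤ) * v.2.1 ^ 2 : ℤ) : ℝ) < T ^ 2 := by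
      push_cast at h3 ⊢
      have hD0 : (0 : ℝ) ≤ (𝔇 : ℝ) := by positivity
      nlinarith [sq_nonneg ((v.2.2.1 : ℝ)), sq_nonneg ((v.2.2.2 : ℝ)), sq_nonneg ((c₁ : ℝ)),
        sq_nonneg ((c₂ : ℝ)), sq_nonneg ((d₁ : ℝ)), sq_nonneg ((d₂ : ℝ)),
        mul_nonneg hD0 (sq_nonneg ((v.2.2.2 : ℝ))), mul_nonneg hD0 (sq_nonneg ((c₂ : ℝ))),
        mul_nonneg hD0 (sq_nonneg ((d₂ : ℝ)))]
    have ha : ((a₁ ^ 2 + (𝔇 : ℤ) * a₂ ^ 2 : ℤ) : ℝ) < T ^ 2 := by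
      push_cast at h03 ⊢
      have hD0 : (0 : ℝ) ≤ (𝔇 : ℝ) := by positivity
      nlinarith [sq_nonneg ((b₁ : ℝ)), sq_nonneg ((b₂ : ℝ)), sq_nonneg ((c₁ : ℝ)),
        sq_nonneg ((c₂ : ℝ)), sq_nonneg ((d₁ : ℝ)), sq_nonneg ((d₂ : ℝ)),
        mul_nonneg hD0 (sq_nonneg ((b₂ : ℝ))), mul_nonneg hD0 (sq_nonneg ((c₂ : ℝ))),
        mul_nonneg hD0 (sq_nonneg ((d₂ : ℝ)))]
    -- N(A) < 4T²
    have hA : (((v.1 - a₁) ^ 2 + (𝔇 : ℤ) * (v.2.1 - a₂) ^ 2 : ℤ) : ℝ) < 4 * T ^ 2 := by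
      push_cast at hx ha ⊢
      have hD0 : (0 : ℝ) ≤ (𝔇 : ℝ) := by positivity
      nlinarith [sq_nonneg ((v.1 : ℝ) + a₁), sq_nonneg ((v.2.1 : ℝ) + a₂),
        mul_nonneg hD0 (sq_nonneg ((v.2.1 : ℝ) + (a₂ : ℝ)))]
    -- hence N(t) < 400
    have hNt : t1 ^ 2 + (𝔇 : ℤ) * t2 ^ 2 ≤ 399 := by
      by_contra hcon
      push_neg at hcon
      have h400 : (400 : ℝ) ≤ ((t1 ^ 2 + (𝔇 : ℤ) * t2 ^ 2 : ℤ) : ℝ) := by exact_mod_cast hcon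
      have hmulR : (((v.1 - a₁) ^ 2 + (𝔇 : ℤ) * (v.2.1 - a₂) ^ 2 : ℤ) : ℝ)
          = ((t1 ^ 2 + (𝔇 : ℤ) * t2 ^ 2 : ℤ) : ℝ) * ((c₁ ^ 2 + (𝔇 : ℤ) * c₂ ^ 2 : ℤ) : ℝ) := by
        rw [← Int.cast_mul, hNmul]
      have hT2 : (0 : ℝ) < T ^ 2 := by positivity
      have hC0 : (0 : ℝ) < ((c₁ ^ 2 + (𝔇 : ℤ) * c₂ ^ 2 : ℤ) : ℝ) := lt_of_lt_of_le (by positivity) hc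
      have step1 : 4 * T ^ 2 ≤ 400 * ((c₁ ^ 2 + (𝔇 : ℤ) * c₂ ^ 2 : ℤ) : ℝ) := by linarith
      have step2 : 400 * ((c₁ ^ 2 + (𝔇 : ℤ) * c₂ ^ 2 : ℤ) : ℝ)
          ≤ ((t1 ^ 2 + (𝔇 : ℤ) * t2 ^ 2 : ℤ) : ℝ) * ((c₁ ^ 2 + (𝔇 : ℤ) * c₂ ^ 2 : ℤ) : ℝ) :=
        mul_le_mul_of_nonneg_right h400 hC0.le
      linarith
    have ht1 : t1 ^ 2 ≤ 399 := by
      nlinarith [mul_nonneg (by linarith : (0:ℤ) ≤ (𝔇:ℤ)) (sq_nonneg t2)]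
    have ht2 : t2 ^ 2 ≤ 399 := by nlinarith [sq_nonneg t1, sq_nonneg t2]
    rw [htdef]
    simp only [Finset.coe_product, Set.mem_prod, Finset.mem_coe, Finset.mem_Icc]
    refine ⟨⟨?_, ?_⟩, ?_, ?_⟩
    · nlinarith [sq_nonneg (t1 + 20)]
    · nlinarith [sq_nonneg (t1 - 20)]
    · nlinarith [sq_nonneg (t2 + 20)]
    · nlinarith [sq_nonneg (t2 - 20)]
  -- f is injective on S
  have hinj : Set.InjOn f S := by
    intro v hv w hw hfeq
    obtain ⟨kv1, kv2, kv3, kv4⟩ := key v hv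
    obtain ⟨kw1, kw2, kw3, kw4⟩ := key w hw
    rw [hfeq] at kv1 kv2 kv3 kv4
    have e1 : v.1 = w.1 := by linarith
    have e2 : v.2.1 = w.2.1 := by linarith
    have e3 : v.2.2.1 = w.2.2.1 := by linarith
    have e4 : v.2.2.2 = w.2.2.2 := by linarith
    exact Prod.ext e1 (Prod.ext e2 (Prod.ext e3 e4))
  have hFin : S.Finite := by
    have : (f '' S).Finite :=
      Set.Finite.subset (Finset.Icc (-19 : ℤ) 19 ×ˢ Finset.Icc (-19 : ℤ) 19).finite_toSet
        (Set.image_subset_iff.mpr hmaps)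
    exact Set.Finite.of_finite_image this hinj
  refine ⟨hFin, ?_⟩
  have h1 : S.ncard = (f '' S).ncard := (Set.ncard_image_of_injOn hinj).symm
  have h2 : (f '' S).ncard ≤ ((Finset.Icc (-19 : ℤ) 19 ×ˢ Finset.Icc (-19 : ℤ) 19 : Finset (ℤ × ℤ)) : Set (ℤ × ℤ)).ncard := by
    exact Set.ncard_le_ncard (Set.image_subset_iff.mpr hmaps) (Finset.finite_toSet _)
  have h3 : ((Finset.Icc (-19 : ℤ) 19 ×ˢ Finset.Icc (-19 : ℤ) 19 : Finset (ℤ × ℤ)) : Set (ℤ × ℤ)).ncard = 1521 := by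
    rw [Set.ncard_coe_finset]
    simp [Finset.card_product, Int.card_Icc]
  omega
end

section
/- Let 𝔇 ≥ 1 be an integer and p an odd prime not dividing 𝔇, and let R = ℤ[√−𝔇]/(p). Then the number of pairs (c, d) ∈ R² for which there exist a, b ∈ R with a·d − b·c = 1 equals (p² − 1)² if −𝔇 is a square modulo p, and equals p⁴ − 1 if −𝔇 is not a square modulo p. -/
/-!
Reducing modulo `p` gives `R ≅ 𝔽_p[X]/(X² + 𝔇)`. If `−𝔇 = s²`, then `s ≠ −s` because `p` is odd
and `p ∤ 𝔇`, so the Chinese remainder theorem splits `R ≅ 𝔽_p × 𝔽_p`; otherwise `X² + 𝔇` is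
irreducible and `R ≅ 𝔽_{p²}`. Over a field a pair is unimodular iff it is nonzero, and over a
product unimodularity holds iff it holds componentwise, giving `(p² − 1)²` and `p⁴ − 1` pairs.
-/

/-- The ring `ℤ[√−𝔇]`, modelled as `ℤ[X]/(X² + 𝔇)`. -/
abbrev ZsqrtNeg (𝔇 : ℕ) : Type := AdjoinRoot ((Polynomial.X : Polynomial ℤ) ^ 2 + Polynomial.C (𝔇 : ℤ))

/-- The quotient ring `R = ℤ[√−𝔇]/(p)`. -/
abbrev Rmod (𝔇 p : ℕ) : Type := ZsqrtNeg 𝔇 ⧸ Ideal.span {(p : ZsqrtNeg 𝔇)}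

open Polynomial

def unimodularPairs (R : Type*) [CommRing R] : Set (R × R) :=
  {cd | ∃ a b : R, a * cd.2 - b * cd.1 = 1}

section UnimodularPairs

variable {A B : Type*} [CommRing A] [CommRing B]

theorem RingEquiv.card_unimodularPairs (e : A ≃+* B) :
    Nat.card (unimodularPairs A) = Nat.card (unimodularPairs B) := by
  refine Nat.card_congr ((Equiv.prodCongr e.toEquiv e.toEquiv).subtypeEquiv fun cd => ?_)
  constructor
  · rintro ⟨a, b, h⟩
    exact ⟨e a, e b, by simpa using congrArg e h⟩
  · rintro ⟨a, b, h⟩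
    exact ⟨e.symm a, e.symm b, e.injective (by simpa using h)⟩

theorem mem_unimodularPairs_prod {cd : (A × B) × (A × B)} :
    cd ∈ unimodularPairs (A × B) ↔
      (cd.1.1, cd.2.1) ∈ unimodularPairs A ∧ (cd.1.2, cd.2.2) ∈ unimodularPairs B := by
  constructor
  · rintro ⟨a, b, h⟩
    rw [Prod.ext_iff] at h
    exact ⟨⟨a.1, b.1, by simpa using h.1⟩, ⟨a.2, b.2, by simpa using h.2⟩⟩
  · rintro ⟨⟨a₁, b₁, h₁⟩, ⟨a₂, b₂, h₂⟩⟩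
    exact ⟨(a₁, a₂), (b₁, b₂), Prod.ext h₁ h₂⟩

theorem card_unimodularPairs_prod :
    Nat.card (unimodularPairs (A × B)) =
      Nat.card (unimodularPairs A) * Nat.card (unimodularPairs B) := by
  rw [← Nat.card_prod]
  refine Nat.card_congr (((Equiv.prodProdProdComm A B A B).subtypeEquiv fun _ => ?_).trans
    Equiv.subtypeProdEquivProd)
  exact mem_unimodularPairs_prod

theorem mem_unimodularPairs_iff_ne_zero {K : Type*} [Field K] {cd : K × K} :
    cd ∈ unimodularPairs K ↔ cd ≠ 0 := by
  obtain ⟨c, d⟩ := cd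
  constructor
  · rintro ⟨a, b, h⟩ h0
    simp_all [Prod.ext_iff]
  · intro h0
    by_cases hd : d = 0
    · have hc : c ≠ 0 := fun hc => h0 (by simp [hc, hd])
      exact ⟨0, -c⁻¹, by field_simp; ring⟩
    · exact ⟨d⁻¹, 0, by field_simp; ring⟩

theorem card_unimodularPairs_of_field (K : Type*) [Field K] [Finite K] :
    Nat.card (unimodularPairs K) = Nat.card K ^ 2 - 1 := by
  classical
  have := Fintype.ofFinite K
  rw [Nat.card_congr (Equiv.subtypeEquivRight fun _ => mem_unimodularPairs_iff_ne_zero),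
    Nat.card_eq_fintype_card, Fintype.card_subtype_compl, Fintype.card_subtype_eq,
    Fintype.card_prod, Nat.card_eq_fintype_card, sq]

end UnimodularPairs

namespace AdjoinRoot

noncomputable def quotSpanNatCastEquiv (f : ℤ[X]) (n : ℕ) :
    AdjoinRoot f ⧸ Ideal.span {(n : AdjoinRoot f)} ≃+*
      AdjoinRoot (f.map (Int.castRingHom (ZMod n))) :=
  (Ideal.quotEquivOfEq (by simp [Ideal.map_span])).trans <|
    (quotAdjoinRootEquivQuotPolynomialQuot (Ideal.span {(n : ℤ)}) f).trans <|
      Ideal.quotientEquiv _ _ (mapEquiv (Int.quotientSpanNatEquivZMod n)) <| by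
        simp [Ideal.map_span, Polynomial.map_map]

noncomputable def mulXSubCEquivProd {R : Type*} [CommRing R] {r s : R} (h : IsUnit (r - s)) :
    AdjoinRoot ((X - C r) * (X - C s)) ≃+* R × R :=
  (Ideal.quotEquivOfEq (Ideal.span_singleton_mul_span_singleton _ _).symm).trans <|
    (Ideal.quotientMulEquivQuotientProd _ _ <|
      (Ideal.isCoprime_span_singleton_iff _ _).mpr (isCoprime_X_sub_C_of_isUnit_sub h)).trans <|
      RingEquiv.prodCongr (quotientSpanXSubCAlgEquiv r).toRingEquiv
        (quotientSpanXSubCAlgEquiv s).toRingEquiv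

theorem natCard_eq_pow_natDegree {R : Type*} [CommRing R] {g : R[X]} (hg : g.Monic) :
    Nat.card (AdjoinRoot g) = Nat.card R ^ g.natDegree := by
  rw [Nat.card_congr (powerBasisAux' hg).equivFun.toEquiv, Nat.card_fun, Nat.card_fin]

end AdjoinRoot

section QuadraticExtension

variable {K : Type*} [Field K] [Finite K] {D : K}

theorem card_unimodularPairs_adjoinRoot_of_isSquare (h2 : (2 : K) ≠ 0) (hD : D ≠ 0)
    (hsq : IsSquare (-D)) :
    Nat.card (unimodularPairs (AdjoinRoot (X ^ 2 + C D))) = (Nat.card K ^ 2 - 1) ^ 2 := by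
  obtain ⟨s, hs⟩ := hsq
  have hs0 : s ≠ 0 := by
    rintro rfl
    exact hD (by simpa using hs)
  have hsplit : X ^ 2 + C D = (X - C s) * (X - C (-s)) := by
    rw [show D = -(s * s) by linear_combination -hs]
    simp only [C_neg, C_mul]
    ring
  have hunit : IsUnit (s - -s) := by
    rw [sub_neg_eq_add, ← two_mul]
    exact (mul_ne_zero h2 hs0).isUnit
  rw [hsplit, (AdjoinRoot.mulXSubCEquivProd hunit).card_unimodularPairs,
    card_unimodularPairs_prod, card_unimodularPairs_of_field, ← sq]

theorem card_unimodularPairs_adjoinRoot_of_not_isSquare (hsq : ¬ IsSquare (-D)) :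
    Nat.card (unimodularPairs (AdjoinRoot (X ^ 2 + C D))) = Nat.card K ^ 4 - 1 := by
  have hmonic : (X ^ 2 + C D).Monic := monic_X_pow_add_C D two_ne_zero
  have hirr : Irreducible (X ^ 2 + C D) := by
    simpa [sub_eq_add_neg] using X_pow_sub_C_irreducible_of_prime Nat.prime_two
      (a := -D) fun b hb => hsq ⟨b, by rw [← hb, sq]⟩
  have := Fact.mk hirr
  have := hmonic.finite_adjoinRoot
  have := Module.finite_of_finite K (M := AdjoinRoot (X ^ 2 + C D))
  rw [card_unimodularPairs_of_field, AdjoinRoot.natCard_eq_pow_natDegree hmonic,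
    natDegree_X_pow_add_C, ← pow_mul]

end QuadraticExtension

theorem unimodular_pair_count_general (𝔇 : ℕ) (p : ℕ) (hp : p.Prime) (hodd : Odd p)
    (hpD : ¬ p ∣ 𝔇) :
    (IsSquare (-(𝔇 : ZMod p)) →
      Nat.card {cd : Rmod 𝔇 p × Rmod 𝔇 p // ∃ a b : Rmod 𝔇 p, a * cd.2 - b * cd.1 = 1}
        = (p ^ 2 - 1) ^ 2) ∧
    (¬ IsSquare (-(𝔇 : ZMod p)) →
      Nat.card {cd : Rmod 𝔇 p × Rmod 𝔇 p // ∃ a b : Rmod 𝔇 p, a * cd.2 - b * cd.1 = 1}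
        = p ^ 4 - 1) := by
  have := Fact.mk hp
  have hRmod : Nat.card {cd : Rmod 𝔇 p × Rmod 𝔇 p // ∃ a b : Rmod 𝔇 p, a * cd.2 - b * cd.1 = 1}
      = Nat.card (unimodularPairs (AdjoinRoot (X ^ 2 + C (𝔇 : ZMod p)))) := by
    have hmap : (X ^ 2 + C (𝔇 : ℤ)).map (Int.castRingHom (ZMod p)) = X ^ 2 + C (𝔇 : ZMod p) := by
      simp
    rw [← hmap]
    exact (AdjoinRoot.quotSpanNatCastEquiv _ p).card_unimodularPairs
  have h2 : (2 : ZMod p) ≠ 0 :=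
    Ring.two_ne_zero ((ZMod.ringChar_zmod_n p).trans_ne (hodd.ne_two_of_dvd_nat dvd_rfl))
  have hD : (𝔇 : ZMod p) ≠ 0 := by rwa [Ne, ZMod.natCast_eq_zero_iff]
  refine ⟨fun hsq => ?_, fun hsq => ?_⟩
  · rw [hRmod, card_unimodularPairs_adjoinRoot_of_isSquare h2 hD hsq, Nat.card_zmod]
  · rw [hRmod, card_unimodularPairs_adjoinRoot_of_not_isSquare hsq, Nat.card_zmod]

/-- For `𝔇 ≥ 1` and an odd prime `p ∤ 𝔇`, the number of unimodular pairs `(c, d)` in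
`R² = (ℤ[√−𝔇]/(p))²` (i.e. pairs with `a·d − b·c = 1` for some `a, b ∈ R`) equals
`(p² − 1)²` if `−𝔇` is a square mod `p`, and `p⁴ − 1` otherwise. -/
theorem unimodular_pair_count (𝔇 : ℕ) (h𝔇 : 1 ≤ 𝔇) (p : ℕ) (hp : p.Prime) (hodd : Odd p)
    (hpD : ¬ p ∣ 𝔇) :
    (IsSquare (-(𝔇 : ZMod p)) →
      Nat.card {cd : Rmod 𝔇 p × Rmod 𝔇 p // ∃ a b : Rmod 𝔇 p, a * cd.2 - b * cd.1 = 1}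
        = (p ^ 2 - 1) ^ 2) ∧
    (¬ IsSquare (-(𝔇 : ZMod p)) →
      Nat.card {cd : Rmod 𝔇 p × Rmod 𝔇 p // ∃ a b : Rmod 𝔇 p, a * cd.2 - b * cd.1 = 1}
        = p ^ 4 - 1) :=
  unimodular_pair_count_general 𝔇 p hp hodd hpD
end

section
/- Let 𝔇 ≥ 1 be an integer, p an odd prime not dividing 𝔇, and x, y, n integers with p ∤ n. Suppose c₁, c₂, d₁, d₂ are integers satisfying A·x² + B·y² + C·x + D·y + E ≡ n (mod p), where A = c₁² + 𝔇c₂², B = 𝔇A, C = 2(c₁d₁ + 𝔇c₂d₂), D = 2𝔇(c₁d₂ − c₂d₁), E = A + d₁² + 𝔇d₂². Then the images c = c₁ + c₂√−𝔇 and d = d₁ + d₂√−𝔇 in R = ℤ[√−𝔇]/(p) form a unimodular pair: there exist a, b ∈ R with a·d − b·c = 1. -/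
/-- The image of `u + v√−𝔇` in `R = ℤ[√−𝔇]/(p)`. -/
noncomputable def toRmod (𝔇 p : ℕ) (u v : ℤ) : Rmod 𝔇 p :=
  Ideal.Quotient.mk (Ideal.span {(p : ZsqrtNeg 𝔇)})
    ((u : ZsqrtNeg 𝔇) + (v : ZsqrtNeg 𝔇) * AdjoinRoot.root _)

/-!
Put `ω = √−𝔇`, `c = c₁ + c₂ω`, `d = d₁ + d₂ω`, `z = x + yω` and `w = cz + d`. The left-hand side of
the congruence is `N(w) + N(c)`, with `N(u + vω) = u² + 𝔇v² = (u + vω)(u − vω)`. Hence in `R` the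
element `w w̄ + c c̄ = (cz + d) w̄ + c c̄` is the image of an integer `≡ n (mod p)`, so a unit, and
that already writes `1` as a combination of `c` and `d`.
-/

theorem isCoprime_of_isUnit_mul_add_mul {R : Type*} [CommRing R] {c d z w' c' : R}
    (h : IsUnit ((c * z + d) * w' + c * c')) : IsCoprime d c := by
  obtain ⟨u, hu⟩ := h.exists_left_inv
  exact ⟨u * w', u * (w' * z + c'), by linear_combination hu⟩

theorem shiftedForm_eq_mul_conj_add_mul_conj {R : Type*} [CommRing R] {ω D : R} (hω : ω ^ 2 = -D)
    (c₁ c₂ d₁ d₂ x y : R) :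
    (c₁ ^ 2 + D * c₂ ^ 2) * x ^ 2 + D * (c₁ ^ 2 + D * c₂ ^ 2) * y ^ 2
        + 2 * (c₁ * d₁ + D * c₂ * d₂) * x + 2 * D * (c₁ * d₂ - c₂ * d₁) * y
        + (c₁ ^ 2 + D * c₂ ^ 2 + d₁ ^ 2 + D * d₂ ^ 2)
      = ((c₁ + c₂ * ω) * (x + y * ω) + (d₁ + d₂ * ω))
          * ((c₁ * x - D * c₂ * y + d₁) - (c₂ * x + c₁ * y + d₂) * ω)
        + (c₁ + c₂ * ω) * (c₁ - c₂ * ω) := by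
  linear_combination ((c₂ * x + c₁ * y + d₂) ^ 2 + c₂ ^ 2
    - c₂ * y * ((c₁ * x - D * c₂ * y + d₁) - (c₂ * x + c₁ * y + d₂) * ω)) * hω

theorem isUnit_intCast_of_not_dvd {R : Type*} [CommRing R] {p : ℕ} (hp : p.Prime)
    (hpR : (p : R) = 0) {n : ℤ} (hn : ¬ (p : ℤ) ∣ n) : IsUnit (n : R) := by
  have hcop : IsCoprime (p : ℤ) n := (Nat.prime_iff_prime_int.mp hp).coprime_iff_not_dvd.mpr hn
  simpa [hpR, isCoprime_zero_left] using hcop.map (Int.castRingHom R)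

namespace Rmod

variable (𝔇 p : ℕ)

noncomputable abbrev ω : Rmod 𝔇 p := Ideal.Quotient.mk _ (AdjoinRoot.root _)

theorem natCast_self : (p : Rmod 𝔇 p) = 0 := by
  rw [← map_natCast (Ideal.Quotient.mk _), Ideal.Quotient.eq_zero_iff_mem]
  exact Ideal.mem_span_singleton_self _

theorem ω_sq : ω 𝔇 p ^ 2 = -(𝔇 : Rmod 𝔇 p) := by
  have h := AdjoinRoot.mk_self (f := (Polynomial.X : Polynomial ℤ) ^ 2 + Polynomial.C (𝔇 : ℤ))
  simp only [map_add, map_pow, AdjoinRoot.mk_X, map_natCast] at h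
  have h' := congrArg (Ideal.Quotient.mk (Ideal.span {(p : ZsqrtNeg 𝔇)})) h
  simp only [map_add, map_pow, map_natCast, map_zero] at h'
  exact eq_neg_of_add_eq_zero_left h'

theorem toRmod_eq (u v : ℤ) : toRmod 𝔇 p u v = u + v * ω 𝔇 p := by
  simp [toRmod]

end Rmod

theorem solution_is_unimodular_general (𝔇 : ℕ) (p : ℕ) (hp : p.Prime)
    (x y n : ℤ) (hn : ¬ ((p : ℤ) ∣ n)) (c₁ c₂ d₁ d₂ : ℤ)
    (hcong : (p : ℤ) ∣
      ((c₁ ^ 2 + (𝔇 : ℤ) * c₂ ^ 2) * x ^ 2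
        + ((𝔇 : ℤ) * (c₁ ^ 2 + (𝔇 : ℤ) * c₂ ^ 2)) * y ^ 2
        + (2 * (c₁ * d₁ + (𝔇 : ℤ) * c₂ * d₂)) * x
        + (2 * (𝔇 : ℤ) * (c₁ * d₂ - c₂ * d₁)) * y
        + ((c₁ ^ 2 + (𝔇 : ℤ) * c₂ ^ 2) + d₁ ^ 2 + (𝔇 : ℤ) * d₂ ^ 2) - n)) :
    ∃ a b : Rmod 𝔇 p, a * toRmod 𝔇 p d₁ d₂ - b * toRmod 𝔇 p c₁ c₂ = 1 := by
  set Q := (c₁ ^ 2 + (𝔇 : ℤ) * c₂ ^ 2) * x ^ 2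
        + ((𝔇 : ℤ) * (c₁ ^ 2 + (𝔇 : ℤ) * c₂ ^ 2)) * y ^ 2
        + (2 * (c₁ * d₁ + (𝔇 : ℤ) * c₂ * d₂)) * x
        + (2 * (𝔇 : ℤ) * (c₁ * d₂ - c₂ * d₁)) * y
        + ((c₁ ^ 2 + (𝔇 : ℤ) * c₂ ^ 2) + d₁ ^ 2 + (𝔇 : ℤ) * d₂ ^ 2)
  have hQ : ¬ (p : ℤ) ∣ Q := fun hQ => hn ((dvd_sub_right hQ).mp hcong)
  have hunit := isUnit_intCast_of_not_dvd hp (Rmod.natCast_self 𝔇 p) hQ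
  have hQ_eq : (Q : Rmod 𝔇 p) = (toRmod 𝔇 p c₁ c₂ * toRmod 𝔇 p x y + toRmod 𝔇 p d₁ d₂)
      * toRmod 𝔇 p (c₁ * x - 𝔇 * c₂ * y + d₁) (-(c₂ * x + c₁ * y + d₂))
      + toRmod 𝔇 p c₁ c₂ * toRmod 𝔇 p c₁ (-c₂) := by
    simp only [Rmod.toRmod_eq, Q]
    push_cast
    linear_combination shiftedForm_eq_mul_conj_add_mul_conj (Rmod.ω_sq 𝔇 p) c₁ c₂ d₁ d₂ x y
  obtain ⟨a, b, hab⟩ := isCoprime_of_isUnit_mul_add_mul (hQ_eq ▸ hunit)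
  exact ⟨a, -b, by rw [← hab]; ring⟩

/-- For `𝔇 ≥ 1`, an odd prime `p ∤ 𝔇` and integers `x, y, n` with `p ∤ n`, if integers
`c₁, c₂, d₁, d₂` satisfy `A x² + B y² + C x + D y + E ≡ n (mod p)` (with the coefficients
of the shifted binary quadratic form), then `(c₁ + c₂√−𝔇, d₁ + d₂√−𝔇)` is a
unimodular pair in `R = ℤ[√−𝔇]/(p)`. -/
theorem solution_is_unimodular (𝔇 : ℕ) (h𝔇 : 1 ≤ 𝔇) (p : ℕ) (hp : p.Prime) (hodd : Odd p)
    (hpD : ¬ p ∣ 𝔇) (x y n : ℤ) (hn : ¬ ((p : ℤ) ∣ n)) (c₁ c₂ d₁ d₂ : ℤ)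
    (hcong : (p : ℤ) ∣
      ((c₁ ^ 2 + (𝔇 : ℤ) * c₂ ^ 2) * x ^ 2
        + ((𝔇 : ℤ) * (c₁ ^ 2 + (𝔇 : ℤ) * c₂ ^ 2)) * y ^ 2
        + (2 * (c₁ * d₁ + (𝔇 : ℤ) * c₂ * d₂)) * x
        + (2 * (𝔇 : ℤ) * (c₁ * d₂ - c₂ * d₁)) * y
        + ((c₁ ^ 2 + (𝔇 : ℤ) * c₂ ^ 2) + d₁ ^ 2 + (𝔇 : ℤ) * d₂ ^ 2) - n)) :
    ∃ a b : Rmod 𝔇 p, a * toRmod 𝔇 p d₁ d₂ - b * toRmod 𝔇 p c₁ c₂ = 1 :=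
  solution_is_unimodular_general 𝔇 p hp x y n hn c₁ c₂ d₁ d₂ hcong
end

section
/- Let Ψ : ℝ → ℂ be a smooth compactly supported function. Then there exists a constant c = c(Ψ) > 0 such that for all real numbers A > 0, B > 0, X > 0, β ≠ 0, and all real numbers u, v: |∫_ℝ∫_ℝ Ψ(x)Ψ(y) e(AβX²x² + ux + BβX²y² + vy) dx dy| ≤ c / (√(AB) · |β| · X²). -/
open MeasureTheory Complex Real FourierTransform
open scoped Real

set_option maxHeartbeats 1000000

noncomputable section

lemma fourier_const_mul (K : ℂ) (g : ℝ → ℂ) (t : ℝ) :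
    𝓕 (fun ξ : ℝ => K * g ξ) t = K * 𝓕 g t := by
  simp_rw [Real.fourier_eq, Circle.smul_def, smul_eq_mul, mul_left_comm _ K,
    integral_const_mul]

lemma flip_innerl : (innerₗ ℝ).flip = innerₗ ℝ := by
  apply LinearMap.ext; intro x
  apply LinearMap.ext; intro y
  simpa using mul_comm y x

/-- One-variable regularized oscillatory integral bound via Parseval. -/
lemma step_b (Ψ : ℝ → ℂ) (hΨi : Integrable Ψ)
    (hhat : Integrable (𝓕 Ψ)) (u : ℝ) (b : ℂ) (hbre : 0 < b.re) :
    ‖∫ x : ℝ, Ψ x * Complex.exp (-b * (x : ℂ) ^ 2 + 2 * π * Complex.I * u * x)‖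
      ≤ (∫ ξ : ℝ, ‖𝓕 Ψ ξ‖) * Real.sqrt (π / ‖b‖) := by
  have hbne : b ≠ 0 := by
    intro h; rw [h] at hbre; simp at hbre
  obtain ⟨B, hBdef⟩ : ∃ B : ℂ, B = (π : ℂ) / b := ⟨_, rfl⟩
  have hπne : (π : ℂ) ≠ 0 := by simpa using Real.pi_ne_zero
  have hBne : B ≠ 0 := hBdef ▸ div_ne_zero hπne hbne
  have hnormSq : 0 < Complex.normSq b := Complex.normSq_pos.mpr hbne
  have hBre : 0 < B.re := by
    rw [hBdef, Complex.div_re]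
    simp only [Complex.ofReal_re, Complex.ofReal_im, zero_mul, add_zero, zero_div]
    have := Real.pi_pos
    positivity
  have hcpow_ne : B ^ (1/2 : ℂ) ≠ 0 := by
    simp [Complex.cpow_eq_zero_iff, hBne]
  have hπB : 0 < ((π : ℂ) * B).re := by
    rw [Complex.mul_re]
    simp only [Complex.ofReal_re, Complex.ofReal_im, zero_mul, sub_zero]
    have := Real.pi_pos
    positivity
  -- the auxiliary Gaussian h
  obtain ⟨h, hh⟩ : ∃ h : ℝ → ℂ,
      h = fun ξ : ℝ => B ^ (1/2 : ℂ) * Complex.exp (-π * B * ((ξ : ℂ) + u) ^ 2) := ⟨_, rfl⟩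
  have hint : Integrable h := by
    have h0 : Integrable (fun ξ : ℝ => Complex.exp (-(π * B) * (ξ:ℂ) ^ 2
        + (-2 * π * B * u) * ξ + (-π * B * u ^ 2))) := integrable_cexp_quadratic hπB _ _
    refine (h0.const_mul (B ^ (1/2 : ℂ))).congr ?_
    filter_upwards with ξ
    rw [hh]
    congr 1
    ring
  -- Fourier transform of h
  have hFh : ∀ t : ℝ, 𝓕 h t = Complex.exp (-b * (t : ℂ) ^ 2 + 2 * π * Complex.I * u * t) := by
    intro t
    have key := congrFun (fourier_gaussian_pi' hBre (-B * u)) t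
    have hsplit : h = fun ξ : ℝ => (B ^ (1/2 : ℂ) * Complex.exp (-π * B * (u:ℂ)^2)) *
        Complex.exp (-π * B * (ξ:ℂ) ^ 2 + 2 * π * (-B * u) * ξ) := by
      rw [hh]
      funext ξ
      have harg : -(π:ℂ) * B * ((ξ:ℂ) + u) ^ 2
          = (-π * B * (u:ℂ)^2) + (-π * B * (ξ:ℂ) ^ 2 + 2 * π * (-B * u) * ξ) := by ring
      rw [harg, Complex.exp_add]
      ring
    rw [hsplit, fourier_const_mul, key]
    have hinv : B ^ (1/2 : ℂ) * Complex.exp (-π * B * (u:ℂ)^2) *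
        (1 / B ^ (1/2 : ℂ) * Complex.exp (-π / B * ((t:ℂ) + Complex.I * (-B * u)) ^ 2))
        = Complex.exp (-π * B * (u:ℂ)^2 + -π / B * ((t:ℂ) + Complex.I * (-B * u)) ^ 2) := by
      rw [Complex.exp_add]
      field_simp
    rw [hinv]
    congr 1
    have hexp : ((t:ℂ) + Complex.I * (-B*u))^2
        = (t:ℂ)^2 - 2*Complex.I*B*u*t - B^2*(u:ℂ)^2 := by
      linear_combination ((B:ℂ)^2 * (u:ℂ)^2) * Complex.I_sq
    have hbB : b * B = (π : ℂ) := by rw [hBdef]; field_simp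
    have hπB' : (π : ℂ) / B = b := by rw [hBdef]; field_simp
    rw [hexp, neg_div, hπB']
    linear_combination (2 * Complex.I * (u:ℂ) * (t:ℂ) + B * (u:ℂ)^2) * hbB
  -- Parseval
  have hpars : ∫ ξ : ℝ, 𝓕 Ψ ξ * h ξ = ∫ x : ℝ, Ψ x * 𝓕 h x := by
    have := VectorFourier.integral_bilin_fourierIntegral_eq_flip
      (E := ℂ) (F := ℂ) (G := ℂ) (μ := volume) (ν := volume) (L := innerₗ ℝ)
      (ContinuousLinearMap.mul ℂ ℂ) Real.continuous_fourierChar continuous_inner hΨi hint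
    rw [flip_innerl] at this
    simp only [ContinuousLinearMap.mul_apply'] at this
    exact this
  -- conclude
  have heq : (∫ x : ℝ, Ψ x * Complex.exp (-b * (x : ℂ) ^ 2 + 2 * π * Complex.I * u * x))
      = ∫ ξ : ℝ, 𝓕 Ψ ξ * h ξ := by
    rw [hpars]
    congr 1; funext x; rw [hFh x]
  rw [heq]
  -- norm bound
  have habsB : ‖B‖ = π / ‖b‖ := by
    rw [hBdef, norm_div]
    congr 1
    simp [abs_of_pos Real.pi_pos]
  have hnorm_h : ∀ ξ : ℝ, ‖h ξ‖ ≤ Real.sqrt (π / ‖b‖) := by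
    intro ξ
    rw [hh]
    simp only [norm_mul]
    have h1 : ‖B ^ (1/2 : ℂ)‖ = ‖B‖ ^ (1/2 : ℝ) := by
      rw [Complex.norm_cpow_of_ne_zero hBne]
      simp
    have h2 : ‖Complex.exp (-π * B * ((ξ : ℂ) + u) ^ 2)‖ ≤ 1 := by
      rw [Complex.norm_exp]
      have hc : ((ξ : ℂ) + u) ^ 2 = (((ξ + u) ^ 2 : ℝ) : ℂ) := by push_cast; ring
      have hre : (-π * B * ((ξ:ℂ) + u) ^ 2).re = -(π * (ξ + u) ^ 2 * B.re) := by
        rw [hc]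
        rw [show -(π:ℂ) * B * (((ξ + u) ^ 2 : ℝ) : ℂ) = ((π * (ξ+u)^2 : ℝ) : ℂ) * (-B) by
          push_cast; ring]
        rw [Complex.re_ofReal_mul]
        simp
      rw [hre, Real.exp_le_one_iff]
      have hge : 0 ≤ π * (ξ + u) ^ 2 * B.re := by positivity
      linarith
    calc ‖B ^ (1/2 : ℂ)‖ * ‖Complex.exp (-π * B * ((ξ : ℂ) + u) ^ 2)‖
        ≤ ‖B‖ ^ (1/2 : ℝ) * 1 := by
          rw [h1]; gcongr
      _ = ‖B‖ ^ (1/2 : ℝ) := mul_one _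
      _ = Real.sqrt (π / ‖b‖) := by
          rw [habsB, ← Real.sqrt_eq_rpow]
  have hM0 : 0 ≤ ∫ ξ : ℝ, ‖𝓕 Ψ ξ‖ := integral_nonneg fun _ => norm_nonneg _
  calc ‖∫ ξ : ℝ, 𝓕 Ψ ξ * h ξ‖ ≤ ∫ ξ : ℝ, ‖𝓕 Ψ ξ * h ξ‖ := norm_integral_le_integral_norm _
    _ ≤ ∫ ξ : ℝ, ‖𝓕 Ψ ξ‖ * Real.sqrt (π / ‖b‖) := by
        apply integral_mono_of_nonneg
        · filter_upwards with ξ; positivity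
        · exact hhat.norm.mul_const _
        · filter_upwards with ξ
          rw [norm_mul]
          gcongr
          exact hnorm_h ξ
    _ = (∫ ξ : ℝ, ‖𝓕 Ψ ξ‖) * Real.sqrt (π / ‖b‖) := integral_mul_const _ _

end

/-- One-variable oscillatory integral bound. -/
lemma single_bound (Ψ : ℝ → ℂ) (hΨi : Integrable Ψ) (hhat : Integrable (𝓕 Ψ))
    (α u : ℝ) (hα : α ≠ 0) :
    ‖∫ x : ℝ, Ψ x * Complex.exp (2 * π * Complex.I * ((α:ℂ) * (x:ℂ) ^ 2 + (u:ℂ) * x))‖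
      ≤ (∫ ξ : ℝ, ‖𝓕 Ψ ξ‖) / Real.sqrt (2 * |α|) := by
  have hαpos : 0 < |α| := abs_pos.mpr hα
  have hM0 : 0 ≤ ∫ ξ : ℝ, ‖𝓕 Ψ ξ‖ := integral_nonneg fun _ => norm_nonneg _
  set bn : ℕ → ℂ := fun n => ((1 / (n + 1) : ℝ) : ℂ) - 2 * π * Complex.I * α with hbn
  have hbre : ∀ n : ℕ, 0 < (bn n).re := by
    intro n
    rw [hbn]
    have h0 : ((2:ℂ) * π * Complex.I * α).re = 0 := by simp
    rw [Complex.sub_re, Complex.ofReal_re, h0, sub_zero]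
    positivity
  -- convergence of the regularized integrals
  have htend : Filter.Tendsto
      (fun n : ℕ => ∫ x : ℝ, Ψ x * Complex.exp (-(bn n) * (x:ℂ) ^ 2 + 2 * π * Complex.I * u * x))
      Filter.atTop
      (nhds (∫ x : ℝ, Ψ x * Complex.exp (2 * π * Complex.I * ((α:ℂ) * (x:ℂ) ^ 2 + (u:ℂ) * x)))) := by
    apply tendsto_integral_of_dominated_convergence (bound := fun x => ‖Ψ x‖)
    · intro n
      apply hΨi.aestronglyMeasurable.mul
      apply Continuous.aestronglyMeasurable
      fun_prop
    · exact hΨi.norm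
    · intro n
      filter_upwards with x
      rw [norm_mul]
      have harg : (-(bn n) * (x:ℂ) ^ 2 + 2 * π * Complex.I * u * x)
          = ((-(1/(n+1)) * x^2 : ℝ) : ℂ)
            + ((2*π*α*x^2 + 2*π*u*x : ℝ) : ℂ) * Complex.I := by
        rw [hbn]; push_cast; ring
      have hnexp : ‖Complex.exp (-(bn n) * (x:ℂ) ^ 2 + 2 * π * Complex.I * u * x)‖ ≤ 1 := by
        rw [Complex.norm_exp, harg]
        simp only [Complex.add_re, Complex.ofReal_re, Complex.mul_I_re, Complex.ofReal_im,
          neg_zero, add_zero]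
        rw [Real.exp_le_one_iff]
        have : (0:ℝ) ≤ 1/(n+1) * x^2 := by positivity
        linarith
      calc ‖Ψ x‖ * ‖Complex.exp (-(bn n) * (x:ℂ) ^ 2 + 2 * π * Complex.I * u * x)‖
          ≤ ‖Ψ x‖ * 1 := by gcongr
        _ = ‖Ψ x‖ := mul_one _
    · filter_upwards with x
      apply Filter.Tendsto.const_mul
      have harg : ∀ n : ℕ, (-(bn n) * (x:ℂ) ^ 2 + 2 * π * Complex.I * u * x)
          = 2 * π * Complex.I * ((α:ℂ) * (x:ℂ) ^ 2 + (u:ℂ) * x)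
            + ((-(1/(n+1)) * x^2 : ℝ) : ℂ) := by
        intro n; rw [hbn]; push_cast; ring
      have h0 : Filter.Tendsto (fun n : ℕ => ((-(1/(n+1)) * x^2 : ℝ) : ℂ))
          Filter.atTop (nhds 0) := by
        have hr : Filter.Tendsto (fun n : ℕ => (-(1/(n+1)) * x^2 : ℝ))
            Filter.atTop (nhds 0) := by
          have h1 := tendsto_one_div_add_atTop_nhds_zero_nat (𝕜 := ℝ)
          have := (h1.neg).mul_const (x^2)
          simpa using this
        have := (Complex.continuous_ofReal.tendsto 0).comp hr
        simpa [Function.comp_def] using this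
      have : Filter.Tendsto
          (fun n : ℕ => (-(bn n) * (x:ℂ) ^ 2 + 2 * π * Complex.I * u * x))
          Filter.atTop (nhds (2 * π * Complex.I * ((α:ℂ) * (x:ℂ) ^ 2 + (u:ℂ) * x))) := by
        simp_rw [harg]
        simpa using (tendsto_const_nhds.add h0)
      exact (Complex.continuous_exp.tendsto _).comp this
  -- uniform bound along the sequence
  have hbd : ∀ n : ℕ,
      ‖∫ x : ℝ, Ψ x * Complex.exp (-(bn n) * (x:ℂ) ^ 2 + 2 * π * Complex.I * u * x)‖
        ≤ (∫ ξ : ℝ, ‖𝓕 Ψ ξ‖) / Real.sqrt (2 * |α|) := by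
    intro n
    refine (step_b Ψ hΨi hhat u (bn n) (hbre n)).trans ?_
    have habs : 2 * π * |α| ≤ ‖bn n‖ := by
      have h2 := Complex.abs_im_le_norm (bn n)
      have him : (bn n).im = -(2 * π * α) := by simp [hbn]
      rw [him] at h2
      calc (2:ℝ) * π * |α| = |(-(2 * π * α))| := by
            rw [abs_neg, abs_mul, abs_mul]
            simp [abs_of_pos Real.pi_pos, mul_assoc]
        _ ≤ ‖bn n‖ := h2
    have hsq : Real.sqrt (π / ‖bn n‖) ≤ 1 / Real.sqrt (2 * |α|) := by
      rw [show (1:ℝ) / Real.sqrt (2 * |α|) = Real.sqrt (1 / (2 * |α|)) by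
        rw [one_div, one_div, Real.sqrt_inv]]
      apply Real.sqrt_le_sqrt
      rw [div_le_div_iff₀ (lt_of_lt_of_le (by positivity) habs) (by positivity), one_mul]
      calc π * (2 * |α|) = 2 * π * |α| := by ring
        _ ≤ ‖bn n‖ := habs
    calc (∫ ξ : ℝ, ‖𝓕 Ψ ξ‖) * Real.sqrt (π / ‖bn n‖)
        ≤ (∫ ξ : ℝ, ‖𝓕 Ψ ξ‖) * (1 / Real.sqrt (2 * |α|)) := by gcongr
      _ = (∫ ξ : ℝ, ‖𝓕 Ψ ξ‖) / Real.sqrt (2 * |α|) := by ring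
  exact le_of_tendsto' ((continuous_norm.tendsto _).comp htend) hbd

/-- For smooth compactly supported `Ψ : ℝ → ℂ` there is `c = c(Ψ) > 0` such that for all
`A, B, X > 0`, `β ≠ 0` and reals `u, v`:
`|∫∫ Ψ(x)Ψ(y) e(AβX²x² + ux + BβX²y² + vy) dx dy| ≤ c / (√(AB)·|β|·X²)`. -/
theorem double_oscillatory_integral_bound (Ψ : ℝ → ℂ) (hΨ : ContDiff ℝ (⊤ : ℕ∞) Ψ)
    (hΨc : HasCompactSupport Ψ) :
    ∃ c : ℝ, 0 < c ∧ ∀ (A B X β u v : ℝ), 0 < A → 0 < B → 0 < X → β ≠ 0 →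
      ‖∫ x : ℝ, ∫ y : ℝ, Ψ x * Ψ y * Complex.exp (2 * Real.pi * Complex.I *
          (A * β * X ^ 2 * x ^ 2 + u * x + B * β * X ^ 2 * y ^ 2 + v * y))‖
        ≤ c / (Real.sqrt (A * B) * |β| * X ^ 2) := by
  -- Ψ is a Schwartz function
  let S : SchwartzMap ℝ ℂ :=
    { toFun := Ψ
      smooth' := hΨ.of_le (by simp)
      decay' := by
        intro k n
        have hc : HasCompactSupport (fun x : ℝ => ‖x‖ ^ k * ‖iteratedFDeriv ℝ n Ψ x‖) :=
          ((hΨc.iteratedFDeriv n).norm).mul_left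
        have hcont : Continuous (fun x : ℝ => ‖x‖ ^ k * ‖iteratedFDeriv ℝ n Ψ x‖) :=
          (continuous_norm.pow k).mul (hΨ.continuous_iteratedFDeriv (by exact_mod_cast le_top)).norm
        obtain ⟨C, hC⟩ := hc.exists_bound_of_continuous hcont
        refine ⟨C, fun x => ?_⟩
        have hx := hC x
        rwa [Real.norm_eq_abs, _root_.abs_of_nonneg (by positivity)] at hx }
  have hΨi : Integrable Ψ := hΨ.continuous.integrable_of_hasCompactSupport hΨc
  have hhat : Integrable (𝓕 Ψ) := by
    have := (SchwartzMap.fourierTransformCLM ℝ S).integrable (μ := volume)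
    rw [SchwartzMap.fourierTransformCLM_apply] at this
    exact this
  set M : ℝ := ∫ ξ : ℝ, ‖𝓕 Ψ ξ‖ with hM
  have hM0 : 0 ≤ M := integral_nonneg fun _ => norm_nonneg _
  refine ⟨M ^ 2 + 1, by positivity, ?_⟩
  intro A B X β u v hA hB hX hβ
  have hX2 : (0:ℝ) < X ^ 2 := pow_pos hX 2
  have ha1ne : A * β * X ^ 2 ≠ 0 := mul_ne_zero (mul_ne_zero hA.ne' hβ) hX2.ne'
  have ha2ne : B * β * X ^ 2 ≠ 0 := mul_ne_zero (mul_ne_zero hB.ne' hβ) hX2.ne'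
  have hβpos : 0 < |β| := abs_pos.mpr hβ
  -- split the double integral as a product
  have hsplit : (∫ x : ℝ, ∫ y : ℝ, Ψ x * Ψ y * Complex.exp (2 * Real.pi * Complex.I *
          (A * β * X ^ 2 * x ^ 2 + u * x + B * β * X ^ 2 * y ^ 2 + v * y)))
      = (∫ x : ℝ, Ψ x * Complex.exp (2 * π * Complex.I *
            (((A * β * X ^ 2 : ℝ) : ℂ) * (x:ℂ) ^ 2 + (u:ℂ) * x)))
        * (∫ y : ℝ, Ψ y * Complex.exp (2 * π * Complex.I *
            (((B * β * X ^ 2 : ℝ) : ℂ) * (y:ℂ) ^ 2 + (v:ℂ) * y))) := by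
    rw [← integral_mul_const]
    congr 1; funext x
    rw [← integral_const_mul]
    congr 1; funext y
    have harg : (2 * (Real.pi : ℂ) * Complex.I *
          ((A:ℂ) * β * (X:ℂ) ^ 2 * (x:ℂ) ^ 2 + (u:ℂ) * x + (B:ℂ) * β * (X:ℂ) ^ 2 * (y:ℂ) ^ 2
            + (v:ℂ) * y))
        = 2 * π * Complex.I * (((A * β * X ^ 2 : ℝ) : ℂ) * (x:ℂ) ^ 2 + (u:ℂ) * x)
          + 2 * π * Complex.I * (((B * β * X ^ 2 : ℝ) : ℂ) * (y:ℂ) ^ 2 + (v:ℂ) * y) := by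
      push_cast; ring
    rw [harg, Complex.exp_add]
    ring
  rw [hsplit, norm_mul]
  have h1 := single_bound Ψ hΨi hhat (A * β * X ^ 2) u ha1ne
  have h2 := single_bound Ψ hΨi hhat (B * β * X ^ 2) v ha2ne
  have habs1 : |A * β * X ^ 2| = A * |β| * X ^ 2 := by
    rw [abs_mul, abs_mul, abs_of_pos hA, abs_of_pos hX2]
  have habs2 : |B * β * X ^ 2| = B * |β| * X ^ 2 := by
    rw [abs_mul, abs_mul, abs_of_pos hB, abs_of_pos hX2]
  set D : ℝ := Real.sqrt (A * B) * |β| * X ^ 2 with hD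
  have hDpos : 0 < D := by
    rw [hD]
    have : (0:ℝ) < Real.sqrt (A * B) := Real.sqrt_pos.mpr (by positivity)
    positivity
  have hprod : Real.sqrt (2 * |A * β * X ^ 2|) * Real.sqrt (2 * |B * β * X ^ 2|) = 2 * D := by
    rw [← Real.sqrt_mul (by positivity)]
    have hsq : 2 * |A * β * X ^ 2| * (2 * |B * β * X ^ 2|) = (2 * D) ^ 2 := by
      rw [habs1, habs2, hD]
      have hAB : Real.sqrt (A * B) ^ 2 = A * B := Real.sq_sqrt (by positivity)
      linear_combination (-(4:ℝ) * |β| ^ 2 * X ^ 4) * hAB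
    rw [hsq, Real.sqrt_sq (by positivity)]
  have hs1 : 0 < Real.sqrt (2 * |A * β * X ^ 2|) := Real.sqrt_pos.mpr (by positivity)
  have hs2 : 0 < Real.sqrt (2 * |B * β * X ^ 2|) := Real.sqrt_pos.mpr (by positivity)
  calc ‖∫ x : ℝ, Ψ x * Complex.exp (2 * π * Complex.I *
            (((A * β * X ^ 2 : ℝ) : ℂ) * (x:ℂ) ^ 2 + (u:ℂ) * x))‖
        * ‖∫ y : ℝ, Ψ y * Complex.exp (2 * π * Complex.I *
            (((B * β * X ^ 2 : ℝ) : ℂ) * (y:ℂ) ^ 2 + (v:ℂ) * y))‖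
      ≤ (M / Real.sqrt (2 * |A * β * X ^ 2|)) * (M / Real.sqrt (2 * |B * β * X ^ 2|)) :=
        mul_le_mul h1 h2 (norm_nonneg _) (div_nonneg hM0 hs1.le)
    _ = M ^ 2 / (Real.sqrt (2 * |A * β * X ^ 2|) * Real.sqrt (2 * |B * β * X ^ 2|)) := by
        rw [div_mul_div_comm]; ring_nf
    _ = M ^ 2 / (2 * D) := by rw [hprod]
    _ ≤ (M ^ 2 + 1) / D := by
        apply div_le_div₀ (by positivity) (by linarith) hDpos (by linarith)
end
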